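/- arXiv:1408.1922 — 2 statements merged into one kernel-verified Lean document; each statement's English description precedes it below -/
import Mathlib

section
/- With the notation above, the matrix 𝒬² − ℙ = blockdiag(T_i Q*Q T_i*) − Q Q* is positive semidefinite, and z*(𝒬²−ℙ)z = 0 whenever z = Qψ for some ψ. -/
/-!
Each `T i = R C_i` is a partial permutation matrix. Hence `S = ∑ₖ Q_kᴴ Q_k` is diagonal with
entries `∑ₖ |ω_k b|²`, where `ω_k = T_kᴴ w`, and `Q_iᴴ z_i = conj ω_i * u_i` coordinatewise, where
`u_i = T_iᴴ z_i`. The quadratic form `zᴴ (𝒬² − ℙ) z` therefore splits over the coordinates `b` into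
the Cauchy–Schwarz gaps `‖ω(b)‖² ‖u(b)‖² − |⟨ω(b), u(b)⟩|²` of the vectors `ω(b) = (ω_i b)_i` and
`u(b) = (u_i b)_i`. By Lagrange's identity each gap is half the sum of the squares
`|ω_i b * u_j b − ω_j b * u_i b|²`. For `z = Qψ` one gets `u_i = ω_i * ψ`, so every gap vanishes.
-/

open Matrix BigOperators
open scoped ComplexOrder

noncomputable section

/-- Restriction matrix extracting the first `m` coordinates of `ℂ^n`. -/
def restrictM (m n : ℕ) : Matrix (Fin m) (Fin n) ℂ :=
  Matrix.of fun i j => if (i : ℕ) = (j : ℕ) then 1 else 0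

/-- Permutation matrix of `σ` acting on `ℂ^n`. -/
def permM {n : ℕ} (σ : Equiv.Perm (Fin n)) : Matrix (Fin n) (Fin n) ℂ :=
  Matrix.of fun i j => if σ j = i then 1 else 0

/-- K-fold stacking matrix: K copies of the identity stacked vertically. -/
def stackM (K m : ℕ) : Matrix (Fin K × Fin m) (Fin m) ℂ :=
  Matrix.of fun p j => if p.2 = j then 1 else 0

/-- Stacked frame-extraction matrix with blocks `T_i = R C_i`. -/
def Tstack (K m n : ℕ) (σ : Fin K → Equiv.Perm (Fin n)) :
    Matrix (Fin K × Fin m) (Fin n) ℂ :=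
  Matrix.of fun p j => (restrictM m n * permM (σ p.1)) p.2 j

open Function

section PartialPermutationMatrices
variable {α β R : Type*} [DecidableEq α] [NonAssocSemiring R]

lemma PEquiv.conjTranspose_toMatrix [DecidableEq β] [StarRing R] (f : β ≃. α) :
    (f.toMatrix : Matrix β α R)ᴴ = f.symm.toMatrix := by
  ext a b
  simp [apply_ite star, mem_iff_mem f]

variable [Fintype α]

lemma PEquiv.toMatrix_mulVec_apply (f : β ≃. α) (x : α → R) (b : β) :
    (f.toMatrix *ᵥ x) b = (f b).elim 0 x := by
  rcases h : f b with _ | a <;> simp [mulVec, dotProduct, h]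

lemma PEquiv.toMatrix_mulVec_mul (f : β ≃. α) (x y : α → R) :
    f.toMatrix *ᵥ (x * y) = (f.toMatrix *ᵥ x) * (f.toMatrix *ᵥ y) := by
  ext b
  simp only [toMatrix_mulVec_apply, Pi.mul_apply]
  cases f b <;> simp

lemma PEquiv.toMatrix_mulVec_star [StarRing R] (f : β ≃. α) (x : α → R) :
    f.toMatrix *ᵥ star x = star (f.toMatrix *ᵥ x) := by
  ext b
  simp only [toMatrix_mulVec_apply, Pi.star_apply]
  cases f b <;> simp

omit [Fintype α] in
lemma PEquiv.symm_toMatrix_mul_diagonal_mul_toMatrix [Fintype β] [DecidableEq β] (f : β ≃. α)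
    (d : β → R) :
    (f.symm.toMatrix : Matrix α β R) * diagonal d * (f.toMatrix : Matrix β α R) =
      diagonal (f.symm.toMatrix *ᵥ d) := by
  refine Matrix.ext fun a a' => ?_
  rw [mul_toMatrix_apply, diagonal_apply, toMatrix_mulVec_apply]
  rcases ha' : f.symm a' with _ | b
  · by_cases h : a = a' <;> simp_all
  · simp only [toMatrix_mul_apply, diagonal_apply]
    rcases ha : f.symm a with _ | b'
    · by_cases h : a = a' <;> simp_all
    · have : b' = b ↔ a = a' := ⟨fun h => by simp_all [eq_some_iff], fun h => by simp_all⟩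
      simp [this]

end PartialPermutationMatrices

section CauchySchwarz
variable {ι R : Type*} [Fintype ι]

def cauchySchwarzGap [CommRing R] [StarRing R] (x y : ι → R) : R :=
  (star x ⬝ᵥ x) * (star y ⬝ᵥ y) - star (star x ⬝ᵥ y) * (star x ⬝ᵥ y)

lemma two_mul_cauchySchwarzGap [CommRing R] [StarRing R] (x y : ι → R) :
    2 * cauchySchwarzGap x y =
      ∑ i, ∑ j, star (x i * y j - x j * y i) * (x i * y j - x j * y i) := by
  set a : ι → ι → R := fun i j => star (x i) * x i * (star (y j) * y j)
  set b : ι → ι → R := fun i j => star (x i) * y i * (star (y j) * x j)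
  have expand : ∀ i j, star (x i * y j - x j * y i) * (x i * y j - x j * y i) =
      a i j + a j i - b i j - b j i := fun i j => by
    simp only [a, b, star_sub, star_mul']
    ring
  have gap : cauchySchwarzGap x y = ∑ i, ∑ j, a i j - ∑ i, ∑ j, b i j := by
    simp only [cauchySchwarzGap, dotProduct, Pi.star_apply, star_sum, star_mul', star_star,
      Finset.sum_mul_sum, a, b]
    rw [Finset.sum_comm (f := fun i j => x i * star (y i) * (star (x j) * y j))]
    congr 1
    exact Finset.sum_congr rfl fun i _ => Finset.sum_congr rfl fun j _ => by ring
  simp only [expand, Finset.sum_sub_distrib, Finset.sum_add_distrib, gap]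
  rw [Finset.sum_comm (f := fun i j => a j i), Finset.sum_comm (f := fun i j => b j i)]
  ring

lemma cauchySchwarzGap_nonneg (x y : ι → ℂ) : 0 ≤ cauchySchwarzGap x y := by
  have h : 0 ≤ 2 * cauchySchwarzGap x y := two_mul_cauchySchwarzGap x y ▸
    Finset.sum_nonneg fun i _ => Finset.sum_nonneg fun j _ => star_mul_self_nonneg _
  rw [← inv_mul_cancel_left₀ two_ne_zero (cauchySchwarzGap x y)]
  exact mul_nonneg (by positivity) h

lemma cauchySchwarzGap_mul_const (x : ι → ℂ) (c : ℂ) :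
    cauchySchwarzGap x (fun i => x i * c) = 0 := by
  have h := two_mul_cauchySchwarzGap x (fun i => x i * c)
  simp only [show ∀ i j, x i * (x j * c) - x j * (x i * c) = 0 from fun i j => by ring,
    mul_zero, Finset.sum_const_zero] at h
  exact (mul_eq_zero.mp h).resolve_left two_ne_zero

lemma sum_cauchySchwarzGap {β : Type*} [Fintype β] [DecidableEq β] [CommRing R] [StarRing R]
    (ω u : ι → β → R) :
    ∑ b, cauchySchwarzGap (fun i => ω i b) (fun i => u i b) =
      ∑ i, star (u i) ⬝ᵥ diagonal (∑ l, star (ω l) * ω l) *ᵥ u i -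
        star (∑ i, star (ω i) * u i) ⬝ᵥ ∑ i, star (ω i) * u i := by
  simp only [cauchySchwarzGap, dotProduct, mulVec_diagonal, Finset.sum_sub_distrib,
    Finset.sum_apply, Pi.star_apply, Pi.mul_apply, star_sum, Finset.sum_mul, Finset.mul_sum]
  congr 1
  rw [Finset.sum_comm]
  exact Finset.sum_congr rfl fun i _ => Finset.sum_congr rfl fun b _ =>
    Finset.sum_congr rfl fun l _ => by ring

end CauchySchwarz

section BlockMatrices
variable {ι α β R : Type*} [Fintype ι] [Fintype α] [CommRing R] [StarRing R]

lemma conjTranspose_of_uncurry_mulVec (G : ι → Matrix α β R) (z : ι × α → R) :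
    (of (uncurry G))ᴴ *ᵥ z = ∑ i, (G i)ᴴ *ᵥ curry z i := by
  ext b
  simp [dotProduct, mulVec, Fintype.sum_prod_type, uncurry]

lemma conjTranspose_of_uncurry_mul_of_uncurry (G : ι → Matrix α β R) :
    (of (uncurry G))ᴴ * of (uncurry G) = ∑ i, (G i)ᴴ * G i := by
  ext a b
  simp [mul_apply, Fintype.sum_prod_type, Matrix.sum_apply, uncurry]

lemma dotProduct_mul_mul_conjTranspose_mulVec {γ : Type*} [Fintype γ] (A : Matrix γ α R)
    (B : Matrix α α R) (x : γ → R) :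
    star x ⬝ᵥ (A * B * Aᴴ) *ᵥ x = star (Aᴴ *ᵥ x) ⬝ᵥ B *ᵥ (Aᴴ *ᵥ x) := by
  rw [star_mulVec, conjTranspose_conjTranspose, ← mulVec_mulVec, ← mulVec_mulVec,
    dotProduct_mulVec]

lemma dotProduct_mul_conjTranspose_mulVec {γ : Type*} [Fintype γ] (A : Matrix γ α R)
    (x : γ → R) :
    star x ⬝ᵥ (A * Aᴴ) *ᵥ x = star (Aᴴ *ᵥ x) ⬝ᵥ (Aᴴ *ᵥ x) := by
  rw [star_mulVec, conjTranspose_conjTranspose, ← mulVec_mulVec, dotProduct_mulVec]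

variable [DecidableEq ι]

lemma dotProduct_blockDiagonal_submatrix_swap_mulVec (F : ι → Matrix α α R) (z : ι × α → R) :
    star z ⬝ᵥ (blockDiagonal F).submatrix Prod.swap Prod.swap *ᵥ z =
      ∑ i, star (curry z i) ⬝ᵥ F i *ᵥ curry z i := by
  simp [dotProduct, mulVec, blockDiagonal_apply, Fintype.sum_prod_type, Finset.mul_sum]

variable [Fintype β]

/-- The matrix `𝒬² − ℙ`. Mathlib's `blockDiagonal` indexes by `(row, block)`, hence the swaps;
`of (uncurry Q)` is the vertical stack of the `Q i`. -/
def blockDiagSubGram (T Q : ι → Matrix α β R) : Matrix (ι × α) (ι × α) R :=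
  (blockDiagonal fun i => T i * (∑ l, (Q l)ᴴ * Q l) * (T i)ᴴ).submatrix Prod.swap Prod.swap -
    of (uncurry Q) * (of (uncurry Q))ᴴ

lemma isHermitian_blockDiagSubGram (T Q : ι → Matrix α β R) :
    (blockDiagSubGram T Q).IsHermitian := by
  rw [blockDiagSubGram, ← conjTranspose_of_uncurry_mul_of_uncurry]
  exact ((isHermitian_blockDiagonal_iff.mpr fun _ =>
    isHermitian_mul_mul_conjTranspose _ (isHermitian_conjTranspose_mul_self _)).submatrix _).sub
    (isHermitian_mul_conjTranspose_self _)

lemma dotProduct_blockDiagSubGram_mulVec (T Q : ι → Matrix α β R) (z : ι × α → R) :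
    star z ⬝ᵥ blockDiagSubGram T Q *ᵥ z =
      ∑ i, star ((T i)ᴴ *ᵥ curry z i) ⬝ᵥ (∑ l, (Q l)ᴴ * Q l) *ᵥ ((T i)ᴴ *ᵥ curry z i) -
        star (∑ i, (Q i)ᴴ *ᵥ curry z i) ⬝ᵥ ∑ i, (Q i)ᴴ *ᵥ curry z i := by
  rw [blockDiagSubGram, sub_mulVec, dotProduct_sub, dotProduct_blockDiagonal_submatrix_swap_mulVec,
    dotProduct_mul_conjTranspose_mulVec, conjTranspose_of_uncurry_mulVec]
  simp only [dotProduct_mul_mul_conjTranspose_mulVec]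

end BlockMatrices

section WeightedPartialPermutations
variable {α β R : Type*} [Fintype α] [DecidableEq α] [DecidableEq β] [CommRing R] [StarRing R]
  {T : Matrix α β R}

lemma conjTranspose_diagonal_mul_mulVec (hT : T ∈ Set.range PEquiv.toMatrix) (w x : α → R) :
    (diagonal w * T)ᴴ *ᵥ x = star (Tᴴ *ᵥ w) * Tᴴ *ᵥ x := by
  obtain ⟨g, rfl⟩ := hT
  rw [conjTranspose_mul, PEquiv.conjTranspose_toMatrix, diagonal_conjTranspose, ← mulVec_mulVec,
    ← PEquiv.toMatrix_mulVec_star, ← PEquiv.toMatrix_mulVec_mul]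
  congr 1
  ext a
  exact mulVec_diagonal _ _ a

lemma conjTranspose_diagonal_mul_mul_self (hT : T ∈ Set.range PEquiv.toMatrix) (w : α → R) :
    (diagonal w * T)ᴴ * (diagonal w * T) = diagonal (star (Tᴴ *ᵥ w) * Tᴴ *ᵥ w) := by
  obtain ⟨g, rfl⟩ := hT
  rw [conjTranspose_mul, PEquiv.conjTranspose_toMatrix, diagonal_conjTranspose, Matrix.mul_assoc,
    ← Matrix.mul_assoc (diagonal _), diagonal_mul_diagonal, ← Matrix.mul_assoc,
    PEquiv.symm_toMatrix_mul_diagonal_mul_toMatrix, ← PEquiv.toMatrix_mulVec_star,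
    ← PEquiv.toMatrix_mulVec_mul]
  rfl

variable [Fintype β]

lemma conjTranspose_mulVec_diagonal_mul_mulVec (hT : T ∈ Set.range PEquiv.toMatrix) (w : α → R)
    (ψ : β → R) :
    Tᴴ *ᵥ ((diagonal w * T) *ᵥ ψ) = (Tᴴ *ᵥ w) * ψ := by
  obtain ⟨g, rfl⟩ := hT
  rw [PEquiv.conjTranspose_toMatrix, mulVec_mulVec, ← Matrix.mul_assoc,
    PEquiv.symm_toMatrix_mul_diagonal_mul_toMatrix]
  ext b
  exact mulVec_diagonal _ _ b

end WeightedPartialPermutations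

section BlockDiagSubGramOfPartialPermutations
variable {ι α β R : Type*} [Fintype ι] [DecidableEq ι] [Fintype α] [DecidableEq α] [Fintype β]
  [DecidableEq β] [CommRing R] [StarRing R] {T Q : ι → Matrix α β R} {w : α → R}

lemma dotProduct_blockDiagSubGram_mulVec_eq_sum_cauchySchwarzGap
    (hT : ∀ i, T i ∈ Set.range PEquiv.toMatrix) (hQ : ∀ i, Q i = diagonal w * T i)
    (z : ι × α → R) :
    star z ⬝ᵥ blockDiagSubGram T Q *ᵥ z =
      ∑ b, cauchySchwarzGap (fun i => ((T i)ᴴ *ᵥ w) b) (fun i => ((T i)ᴴ *ᵥ curry z i) b) := by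
  have hgram : ∑ l, (Q l)ᴴ * Q l = diagonal (∑ l, star ((T l)ᴴ *ᵥ w) * (T l)ᴴ *ᵥ w) := by
    simp only [hQ, conjTranspose_diagonal_mul_mul_self (hT _)]
    exact (map_sum (diagonalAddMonoidHom β R) _ _).symm
  rw [sum_cauchySchwarzGap, dotProduct_blockDiagSubGram_mulVec, hgram]
  simp only [hQ, conjTranspose_diagonal_mul_mulVec (hT _)]

end BlockDiagSubGramOfPartialPermutations

section ComplexBlockDiagSubGram
variable {ι α β : Type*} [Fintype ι] [DecidableEq ι] [Fintype α] [DecidableEq α] [Fintype β]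
  [DecidableEq β] {T Q : ι → Matrix α β ℂ} {w : α → ℂ}

theorem posSemidef_blockDiagSubGram (hT : ∀ i, T i ∈ Set.range PEquiv.toMatrix)
    (hQ : ∀ i, Q i = diagonal w * T i) : (blockDiagSubGram T Q).PosSemidef :=
  .of_dotProduct_mulVec_nonneg (isHermitian_blockDiagSubGram T Q) fun z => by
    rw [dotProduct_blockDiagSubGram_mulVec_eq_sum_cauchySchwarzGap hT hQ]
    exact Finset.sum_nonneg fun b _ => cauchySchwarzGap_nonneg _ _

theorem dotProduct_blockDiagSubGram_mulVec_of_uncurry_mulVec_eq_zero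
    (hT : ∀ i, T i ∈ Set.range PEquiv.toMatrix) (hQ : ∀ i, Q i = diagonal w * T i) (ψ : β → ℂ) :
    star (of (uncurry Q) *ᵥ ψ) ⬝ᵥ blockDiagSubGram T Q *ᵥ (of (uncurry Q) *ᵥ ψ) = 0 := by
  rw [dotProduct_blockDiagSubGram_mulVec_eq_sum_cauchySchwarzGap hT hQ]
  refine Finset.sum_eq_zero fun b _ => ?_
  have hcurry : ∀ i, curry (of (uncurry Q) *ᵥ ψ) i = Q i *ᵥ ψ := fun i => rfl
  simp only [hcurry, hQ, conjTranspose_mulVec_diagonal_mul_mulVec (hT _)]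
  exact cauchySchwarzGap_mul_const _ _

end ComplexBlockDiagSubGram

def Fin.castPEquiv (m n : ℕ) : Fin m ≃. Fin n where
  toFun i := if h : (i : ℕ) < n then some ⟨i, h⟩ else none
  invFun j := if h : (j : ℕ) < m then some ⟨j, h⟩ else none
  inv i j := by
    split_ifs <;> simp [Fin.ext_iff, eq_comm] <;> omega

@[simp]
lemma Fin.castPEquiv_eq_some_iff {m n : ℕ} {i : Fin m} {j : Fin n} :
    Fin.castPEquiv m n i = some j ↔ (i : ℕ) = j := by
  simp only [Fin.castPEquiv, PEquiv.coe_mk, Option.dite_none_right_eq_some,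
    Option.some.injEq]
  exact ⟨fun ⟨_, h⟩ => h ▸ rfl, fun h => ⟨h ▸ j.isLt, Fin.ext h⟩⟩

lemma restrictM_eq_toMatrix (m n : ℕ) : restrictM m n = (Fin.castPEquiv m n).toMatrix := by
  ext i j
  simp [restrictM]

lemma permM_eq_toMatrix {n : ℕ} (σ : Equiv.Perm (Fin n)) : permM σ = σ.symm.toPEquiv.toMatrix := by
  ext i j
  simp [permM, Equiv.eq_symm_apply, eq_comm]

lemma restrictM_mul_permM_mem_range_toMatrix {m n : ℕ} (σ : Equiv.Perm (Fin n)) :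
    restrictM m n * permM σ ∈ Set.range PEquiv.toMatrix :=
  ⟨(Fin.castPEquiv m n).trans σ.symm.toPEquiv, by
    rw [PEquiv.toMatrix_trans, restrictM_eq_toMatrix, permM_eq_toMatrix]⟩

theorem stmt9_general {K m n : ℕ} (σ : Fin K → Equiv.Perm (Fin n))
    (w : Fin m → ℂ)
    (T : Fin K → Matrix (Fin m) (Fin n) ℂ)
    (hT : ∀ i, T i = restrictM m n * permM (σ i))
    (Q : Fin K → Matrix (Fin m) (Fin n) ℂ)
    (hQ : ∀ i, Q i = Matrix.diagonal w * T i)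
    (M : Matrix (Fin K × Fin m) (Fin K × Fin m) ℂ)
    (hM : M = Matrix.of fun p q =>
      (if p.1 = q.1 then (T p.1 * (∑ l : Fin K, (Q l)ᴴ * Q l) * (T p.1)ᴴ) p.2 q.2 else 0) -
        (Q p.1 * (Q q.1)ᴴ) p.2 q.2) :
    M.PosSemidef ∧
    ∀ ψ : Fin n → ℂ,
      star (fun p : Fin K × Fin m => (Q p.1).mulVec ψ p.2) ⬝ᵥ
        M.mulVec (fun p : Fin K × Fin m => (Q p.1).mulVec ψ p.2) = 0 := by
  have hT' : ∀ i, T i ∈ Set.range PEquiv.toMatrix := fun i =>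
    hT i ▸ restrictM_mul_permM_mem_range_toMatrix (σ i)
  obtain rfl : M = blockDiagSubGram T Q := hM ▸ rfl
  exact ⟨posSemidef_blockDiagSubGram hT' hQ,
    dotProduct_blockDiagSubGram_mulVec_of_uncurry_mulVec_eq_zero hT' hQ⟩

theorem stmt9 {K m n : ℕ} (hmn : m ≤ n) (σ : Fin K → Equiv.Perm (Fin n))
    (w : Fin m → ℂ)
    (T : Fin K → Matrix (Fin m) (Fin n) ℂ)
    (hT : ∀ i, T i = restrictM m n * permM (σ i))
    (Q : Fin K → Matrix (Fin m) (Fin n) ℂ)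
    (hQ : ∀ i, Q i = Matrix.diagonal w * T i)
    (M : Matrix (Fin K × Fin m) (Fin K × Fin m) ℂ)
    (hM : M = Matrix.of fun p q =>
      (if p.1 = q.1 then (T p.1 * (∑ l : Fin K, (Q l)ᴴ * Q l) * (T p.1)ᴴ) p.2 q.2 else 0) -
        (Q p.1 * (Q q.1)ᴴ) p.2 q.2) :
    M.PosSemidef ∧
    ∀ ψ : Fin n → ℂ,
      star (fun p : Fin K × Fin m => (Q p.1).mulVec ψ p.2) ⬝ᵥ
        M.mulVec (fun p : Fin K × Fin m => (Q p.1).mulVec ψ p.2) = 0 :=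
  stmt9_general σ w T hT Q hQ M hM
end
end

section
/- For the frame update z ← P_Q z with P_Q = Q(Q*Q)^{-1}Q* (Q*Q invertible), the pairwise discrepancy is non-increasing: (P_Q z)* (𝒬² − QQ*) (P_Q z) = 0 ≤ z*(𝒬² − QQ*)z; in fact P_Q z lies in range(Q), on which the quadratic form 𝒬² − QQ* vanishes whenever T_i T_i* = I for all i. -/
open Matrix BigOperators

noncomputable section

/-!
Each block `T_i` of the stacked matrix reads one global coordinate, so `T` is the selection matrix
of a map `x`, and `Q = diag(v) T`. On each fibre of `x`, Lagrange's identity gives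
`2 z*(𝒬² − QQ*)z = ∑_{x p = x q} |z_p v_q − z_q v_p|²`. Hence the form is nonnegative, and it
vanishes on `range Q`, whose vectors have the shape `z_p = v_p ψ(x p)`; the projection `P_Q z`
lies in `range Q`.
-/

open scoped ComplexOrder

section Discrepancy

variable {ι κ : Type*} [Fintype ι] [DecidableEq ι] [Fintype κ] [DecidableEq κ]

def selectionMatrix (x : ι → κ) : Matrix ι κ ℂ :=
  (1 : Matrix κ κ ℂ).submatrix x id

def frameMatrix (x : ι → κ) (v : ι → ℂ) : Matrix ι κ ℂ :=
  diagonal v * selectionMatrix x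

/-- The matrix `𝒬² − QQ*` for `Q = frameMatrix x v`. -/
def discrepancyMatrix (x : ι → κ) (v : ι → ℂ) : Matrix ι ι ℂ :=
  diagonal (selectionMatrix x *ᵥ ((selectionMatrix x)ᴴ *ᵥ fun p => (‖v p‖ : ℂ) ^ 2)) -
    frameMatrix x v * (frameMatrix x v)ᴴ

omit [Fintype ι] [DecidableEq ι] in
lemma selectionMatrix_mulVec (x : ι → κ) (u : κ → ℂ) :
    selectionMatrix x *ᵥ u = u ∘ x := by
  ext p
  simp [selectionMatrix, mulVec, dotProduct, one_apply]

omit [DecidableEq ι] [Fintype κ] in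
lemma conjTranspose_selectionMatrix_mulVec (x : ι → κ) (u : ι → ℂ) :
    (selectionMatrix x)ᴴ *ᵥ u = fun j => ∑ p, if j = x p then u p else 0 := by
  ext j
  simp [selectionMatrix, mulVec, dotProduct, one_apply, @eq_comm _ (x _)]

lemma frameMatrix_mulVec (x : ι → κ) (v : ι → ℂ) (ψ : κ → ℂ) :
    frameMatrix x v *ᵥ ψ = fun p => v p * ψ (x p) := by
  ext p
  simp [frameMatrix, ← mulVec_mulVec, selectionMatrix_mulVec, mulVec_diagonal]

lemma discrepancyMatrix_mulVec (x : ι → κ) (v z : ι → ℂ) :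
    discrepancyMatrix x v *ᵥ z = fun p =>
      ∑ q, if x p = x q then ‖v q‖ ^ 2 * z p - v p * (star (v q) * z q) else 0 := by
  ext p
  simp only [discrepancyMatrix, frameMatrix, sub_mulVec, conjTranspose_mul, diagonal_conjTranspose,
    ← mulVec_mulVec, mulVec_diagonal, selectionMatrix_mulVec, conjTranspose_selectionMatrix_mulVec,
    Pi.sub_apply, Function.comp_apply, Pi.star_apply, Finset.sum_mul, Finset.mul_sum,
    ← Finset.sum_sub_distrib]
  refine Finset.sum_congr rfl fun q _ => ?_
  split_ifs <;> ring

lemma dotProduct_discrepancyMatrix_mulVec (x : ι → κ) (v z : ι → ℂ) :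
    star z ⬝ᵥ discrepancyMatrix x v *ᵥ z =
      ∑ p, ∑ q, if x p = x q then
        star (z p) * z p * ‖v q‖ ^ 2 - star (z p) * v p * (star (v q) * z q) else 0 := by
  simp only [discrepancyMatrix_mulVec, dotProduct, Pi.star_apply, Finset.mul_sum, mul_ite,
    mul_zero]
  refine Finset.sum_congr rfl fun p _ => Finset.sum_congr rfl fun q _ => ?_
  split_ifs <;> ring

lemma two_mul_dotProduct_discrepancyMatrix_mulVec (x : ι → κ) (v z : ι → ℂ) :
    2 * (star z ⬝ᵥ discrepancyMatrix x v *ᵥ z) =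
      ∑ p, ∑ q, if x p = x q then
        star (z p * v q - z q * v p) * (z p * v q - z q * v p) else 0 := by
  rw [two_mul, dotProduct_discrepancyMatrix_mulVec]
  nth_rewrite 2 [Finset.sum_comm]
  rw [← Finset.sum_add_distrib]
  refine Finset.sum_congr rfl fun p _ => ?_
  rw [← Finset.sum_add_distrib]
  refine Finset.sum_congr rfl fun q _ => ?_
  simp only [eq_comm (a := x q)]
  split_ifs
  · simp only [star_sub, star_mul', ← Complex.conj_mul', RCLike.star_def]
    ring
  · simp

theorem dotProduct_discrepancyMatrix_mulVec_nonneg (x : ι → κ) (v z : ι → ℂ) :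
    0 ≤ star z ⬝ᵥ discrepancyMatrix x v *ᵥ z := by
  have h2 : 0 ≤ 2 * (star z ⬝ᵥ discrepancyMatrix x v *ᵥ z) := by
    rw [two_mul_dotProduct_discrepancyMatrix_mulVec]
    refine Finset.sum_nonneg fun p _ => Finset.sum_nonneg fun q _ => ?_
    split_ifs
    exacts [star_mul_self_nonneg _, le_rfl]
  calc (0 : ℂ) ≤ 2⁻¹ * (2 * (star z ⬝ᵥ discrepancyMatrix x v *ᵥ z)) :=
        mul_nonneg (by positivity) h2
    _ = star z ⬝ᵥ discrepancyMatrix x v *ᵥ z := by ring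

theorem dotProduct_discrepancyMatrix_mulVec_frameMatrix_mulVec (x : ι → κ) (v : ι → ℂ)
    (ψ : κ → ℂ) :
    star (frameMatrix x v *ᵥ ψ) ⬝ᵥ discrepancyMatrix x v *ᵥ (frameMatrix x v *ᵥ ψ) = 0 := by
  have h2 : 2 * (star (frameMatrix x v *ᵥ ψ) ⬝ᵥ
      discrepancyMatrix x v *ᵥ (frameMatrix x v *ᵥ ψ)) = 0 := by
    rw [two_mul_dotProduct_discrepancyMatrix_mulVec]
    refine Finset.sum_eq_zero fun p _ => Finset.sum_eq_zero fun q _ => ?_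
    split_ifs with h
    · simp only [frameMatrix_mulVec, h]
      ring
    · rfl
  simpa using h2

end Discrepancy

def frameIndex {K m n : ℕ} (hmn : m ≤ n) (σ : Fin K → Equiv.Perm (Fin n)) (p : Fin K × Fin m) :
    Fin n :=
  (σ p.1).symm (Fin.castLE hmn p.2)

lemma Tstack_eq_selectionMatrix {K m n : ℕ} (hmn : m ≤ n) (σ : Fin K → Equiv.Perm (Fin n)) :
    Tstack K m n σ = selectionMatrix (frameIndex hmn σ) := by
  ext p j
  simp [Tstack, selectionMatrix, restrictM, permM, mul_apply, one_apply, frameIndex,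
    Equiv.symm_apply_eq]
  simp [Fin.ext_iff]

lemma stackM_mulVec {K m : ℕ} (v : Fin m → ℂ) : stackM K m *ᵥ v = fun p => v p.2 := by
  ext p
  simp [stackM, mulVec, dotProduct]

theorem stmt19_general {K m n : ℕ} (hmn : m ≤ n) (σ : Fin K → Equiv.Perm (Fin n))
    (w : Fin m → ℂ)
    (Q : Matrix (Fin K × Fin m) (Fin n) ℂ)
    (hQ : Q = Matrix.diagonal ((stackM K m).mulVec w) * Tstack K m n σ)
    (M : Matrix (Fin K × Fin m) (Fin K × Fin m) ℂ)
    (hM : M = Matrix.diagonal ((Tstack K m n σ).mulVec ((Tstack K m n σ)ᴴ.mulVec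
        ((stackM K m).mulVec (fun k => (‖w k‖ : ℂ) ^ 2)))) - Q * Qᴴ)
    (z : Fin K × Fin m → ℂ) :
    star ((Q * (Qᴴ * Q)⁻¹ * Qᴴ).mulVec z) ⬝ᵥ
        M.mulVec ((Q * (Qᴴ * Q)⁻¹ * Qᴴ).mulVec z) = 0 ∧
    0 ≤ star z ⬝ᵥ M.mulVec z := by
  have hQ' : Q = frameMatrix (frameIndex hmn σ) fun p => w p.2 := by
    rw [hQ, Tstack_eq_selectionMatrix hmn σ, stackM_mulVec, frameMatrix]
  have hM' : M = discrepancyMatrix (frameIndex hmn σ) fun p => w p.2 := by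
    rw [hM, hQ', Tstack_eq_selectionMatrix hmn σ, stackM_mulVec]
    rfl
  have hP : (Q * (Qᴴ * Q)⁻¹ * Qᴴ) *ᵥ z = Q *ᵥ (((Qᴴ * Q)⁻¹ * Qᴴ) *ᵥ z) := by
    rw [mulVec_mulVec, Matrix.mul_assoc]
  rw [hM', hP]
  exact ⟨hQ' ▸ dotProduct_discrepancyMatrix_mulVec_frameMatrix_mulVec _ _ _,
    dotProduct_discrepancyMatrix_mulVec_nonneg _ _ _⟩

theorem stmt19 {K m n : ℕ} (hmn : m ≤ n) (σ : Fin K → Equiv.Perm (Fin n))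
    (w : Fin m → ℂ)
    (Q : Matrix (Fin K × Fin m) (Fin n) ℂ)
    (hQ : Q = Matrix.diagonal ((stackM K m).mulVec w) * Tstack K m n σ)
    (hinv : IsUnit (Qᴴ * Q))
    (M : Matrix (Fin K × Fin m) (Fin K × Fin m) ℂ)
    (hM : M = Matrix.diagonal ((Tstack K m n σ).mulVec ((Tstack K m n σ)ᴴ.mulVec
        ((stackM K m).mulVec (fun k => (‖w k‖ : ℂ) ^ 2)))) - Q * Qᴴ)
    (z : Fin K × Fin m → ℂ) :
    star ((Q * (Qᴴ * Q)⁻¹ * Qᴴ).mulVec z) ⬝ᵥ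
        M.mulVec ((Q * (Qᴴ * Q)⁻¹ * Qᴴ).mulVec z) = 0 ∧
    0 ≤ star z ⬝ᵥ M.mulVec z :=
  stmt19_general hmn σ w Q hQ M hM z
end
end
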